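/- If w is an A_2 weight on R^n, then there exist constants η ∈ (0,1) and β > 0, depending only on n and [w]_{A_2}, such that β^{-1}(|E|/|Q|)^{1/(2η)} ≤ w(E)/w(Q) ≤ β(|E|/|Q|)^{2η} for every cube Q and every measurable subset E ⊂ Q. -/

import Mathlib

open MeasureTheory Set

noncomputable section

/-- The open cube in `ℝⁿ` with center `z` and half side length `r`. -/
def cube (n : ℕ) (z : Fin n → ℝ) (r : ℝ) : Set (Fin n → ℝ) :=
  {x | ∀ i, |x i - z i| < r}

/-- `w` is a Muckenhoupt `A₂` weight on `ℝⁿ` with `A₂`-constant (at most) `C`. -/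
def IsA2 (n : ℕ) (w : (Fin n → ℝ) → ℝ) (C : ℝ) : Prop :=
  (∀ x, 0 < w x) ∧ LocallyIntegrable w ∧ LocallyIntegrable (fun x => (w x)⁻¹) ∧
    ∀ z r, 0 < r →
      (∫ x in cube n z r, w x) * (∫ x in cube n z r, (w x)⁻¹) ≤
        C * ((volume (cube n z r)).toReal) ^ 2

/-!
Cauchy–Schwarz turns the `A₂` condition into `(|E| / |Q|)² ≤ C w(E) / w(Q)`, the lower bound.
Applied to `Q \ F` it gives a weak decay: `|F| ≤ |Q| / 2` implies `w(F) ≤ (1 - 1/(4C)) w(Q)`.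
A Calderón–Zygmund stopping time iterates this to `w(E) ≤ (1 - 1/(4C))^k w(Q)` whenever
`|E| ≤ 2^{-(n+2)k} |Q|`: for the step to `k + 1`, the maximal dyadic subcubes of `Q` in which `E`
has density above `2^{-(n+2)k-n-1}` cover almost all of `E` (dyadic Lebesgue density), fill at
most half of `Q`, and, their parents not being among them, `E` has density at most `2^{-(n+2)k}`
in each of them. Choosing `k` with `|E| / |Q| ≈ 2^{-(n+2)k}` gives the power law.
-/

open scoped ENNReal

namespace Muckenhoupt

variable {n : ℕ}

lemma cube_eq_pi (z : Fin n → ℝ) (r : ℝ) :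
    cube n z r = Set.pi univ fun i => Ioo (z i - r) (z i + r) := by
  ext x
  simp only [cube, mem_ofPred_eq, Set.mem_pi, mem_univ, forall_true_left, mem_Ioo, abs_sub_lt_iff]
  exact forall_congr' fun i => ⟨fun h => ⟨by linarith, by linarith⟩,
    fun h => ⟨by linarith, by linarith⟩⟩

lemma measurableSet_cube (z : Fin n → ℝ) (r : ℝ) : MeasurableSet (cube n z r) := by
  rw [cube_eq_pi]
  exact MeasurableSet.univ_pi fun _ => measurableSet_Ioo

lemma volume_cube (z : Fin n → ℝ) (r : ℝ) :
    volume (cube n z r) = ENNReal.ofReal (2 * r) ^ n := by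
  simp [cube_eq_pi, volume_pi_pi, Real.volume_Ioo, show ∀ a : ℝ, a + r - (a - r) = 2 * r by
    intro a; ring]

lemma volume_cube_pos (z : Fin n → ℝ) {r : ℝ} (hr : 0 < r) : 0 < volume (cube n z r) := by
  rw [volume_cube]
  exact ENNReal.pow_pos (ENNReal.ofReal_pos.mpr (by linarith)) n

lemma volume_cube_ne_top (z : Fin n → ℝ) (r : ℝ) : volume (cube n z r) ≠ ∞ := by
  rw [volume_cube]
  exact ENNReal.pow_ne_top ENNReal.ofReal_ne_top

lemma toReal_volume_div_le_one {z : Fin n → ℝ} {r : ℝ} {E : Set (Fin n → ℝ)}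
    (hEQ : E ⊆ cube n z r) : (volume E).toReal / (volume (cube n z r)).toReal ≤ 1 :=
  div_le_one_of_le₀ (ENNReal.toReal_mono (volume_cube_ne_top z r) (measure_mono hEQ))
    ENNReal.toReal_nonneg

lemma cube_eq_ball {z : Fin n → ℝ} {r : ℝ} (hr : 0 < r) : cube n z r = Metric.ball z r := by
  ext x
  simp [cube, dist_pi_lt_iff hr, Real.dist_eq]

lemma integrableOn_cube {f : (Fin n → ℝ) → ℝ} (hf : LocallyIntegrable f) (z : Fin n → ℝ)
    (r : ℝ) : IntegrableOn f (cube n z r) := by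
  refine (hf.integrableOn_isCompact (isCompact_univ_pi fun i =>
    isCompact_Icc (a := z i - r) (b := z i + r))).mono_set ?_
  rw [cube_eq_pi]
  exact Set.pi_mono fun i _ => Ioo_subset_Icc_self

/-- The generation-`j` subcube at position `m` in the dyadic grid of `cube n z r`; it lies in
`cube n z r` exactly when `m i < 2 ^ j` for all `i`. -/
def dyadicCube (n : ℕ) (z : Fin n → ℝ) (r : ℝ) (j : ℕ) (m : Fin n → ℕ) : Set (Fin n → ℝ) :=
  cube n (fun i => z i - r + (2 * m i + 1) * (r / 2 ^ j)) (r / 2 ^ j)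

section DyadicGrid

variable {z : Fin n → ℝ} {r : ℝ}

lemma mem_dyadicCube_iff {j : ℕ} {m : Fin n → ℕ} {x : Fin n → ℝ} :
    x ∈ dyadicCube n z r j m ↔ ∀ i,
      2 * m i * (r / 2 ^ j) < x i - (z i - r) ∧ x i - (z i - r) < (2 * m i + 2) * (r / 2 ^ j) := by
  simp only [dyadicCube, cube, mem_ofPred_eq, abs_sub_lt_iff]
  exact forall_congr' fun i => ⟨fun h => ⟨by linarith, by linarith⟩,
    fun h => ⟨by linarith, by linarith⟩⟩

lemma measurableSet_dyadicCube (j : ℕ) (m : Fin n → ℕ) :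
    MeasurableSet (dyadicCube n z r j m) :=
  measurableSet_cube _ _

lemma dyadicCube_zero : dyadicCube n z r 0 0 = cube n z r := by
  ext x
  simp [dyadicCube]

lemma dyadicCube_subset_cube (hr : 0 < r) {j : ℕ} {m : Fin n → ℕ} (hm : ∀ i, m i < 2 ^ j) :
    dyadicCube n z r j m ⊆ cube n z r := by
  intro x hx i
  obtain ⟨h₁, h₂⟩ := mem_dyadicCube_iff.mp hx i
  have hmi : (m i : ℝ) + 1 ≤ 2 ^ j := by exact_mod_cast hm i
  have hs : (2 * m i + 2) * (r / 2 ^ j) ≤ 2 * r := by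
    rw [mul_div_assoc', div_le_iff₀ (by positivity)]
    nlinarith
  have : (0 : ℝ) ≤ 2 * m i * (r / 2 ^ j) := by positivity
  rw [abs_sub_lt_iff]
  constructor <;> linarith

lemma dyadicCube_succ_subset (hr : 0 < r) (j : ℕ) (m : Fin n → ℕ) :
    dyadicCube n z r (j + 1) m ⊆ dyadicCube n z r j fun i => m i / 2 := by
  intro x hx
  rw [mem_dyadicCube_iff] at hx ⊢
  intro i
  obtain ⟨h₁, h₂⟩ := hx i
  have hsucc : r / 2 ^ (j + 1) = r / 2 ^ j / 2 := by rw [pow_succ]; ring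
  have hdiv : (m i : ℝ) = 2 * (m i / 2 : ℕ) + (m i % 2 : ℕ) := by
    exact_mod_cast (Nat.div_add_mod (m i) 2).symm
  have hmod : ((m i % 2 : ℕ) : ℝ) ≤ 1 := by exact_mod_cast Nat.le_of_lt_succ (Nat.mod_lt _ two_pos)
  have : 0 < r / 2 ^ j := by positivity
  rw [hsucc, hdiv] at h₁ h₂
  constructor <;> nlinarith [(Nat.cast_nonneg (m i % 2) : (0 : ℝ) ≤ _)]

lemma dyadicCube_add_subset (hr : 0 < r) (j d : ℕ) (m : Fin n → ℕ) :
    dyadicCube n z r (j + d) m ⊆ dyadicCube n z r j fun i => m i / 2 ^ d := by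
  induction d generalizing m with
  | zero => simp
  | succ d ih =>
    refine (dyadicCube_succ_subset hr (j + d) m).trans ((ih _).trans_eq ?_)
    simp only [Nat.div_div_eq_div_mul, pow_succ']

lemma eq_of_mem_dyadicCube (hr : 0 < r) {j : ℕ} {m m' : Fin n → ℕ} {x : Fin n → ℝ}
    (hx : x ∈ dyadicCube n z r j m) (hx' : x ∈ dyadicCube n z r j m') : m = m' := by
  rw [mem_dyadicCube_iff] at hx hx'
  funext i
  have : 0 < r / 2 ^ j := by positivity
  by_contra hne
  rcases Nat.lt_or_gt_of_ne hne with h | h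
  · have : (m i : ℝ) + 1 ≤ m' i := by exact_mod_cast h
    nlinarith [(hx i).2, (hx' i).1]
  · have : (m' i : ℝ) + 1 ≤ m i := by exact_mod_cast h
    nlinarith [(hx' i).2, (hx i).1]

lemma volume_dyadicCube_eq_two_pow_mul (hr : 0 < r) (j : ℕ) (m m' : Fin n → ℕ) :
    volume (dyadicCube n z r j m) = 2 ^ n * volume (dyadicCube n z r (j + 1) m') := by
  rw [dyadicCube, dyadicCube, volume_cube, volume_cube, ← mul_pow, ← ENNReal.ofReal_ofNat 2,
    ← ENNReal.ofReal_mul zero_le_two, pow_succ]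
  congr 2
  field_simp

/-- The faces of all dyadic subcubes; a point of `cube n z r` off them lies in an (open) dyadic
subcube of every generation. -/
def gridLines (n : ℕ) (z : Fin n → ℝ) (r : ℝ) : Set (Fin n → ℝ) :=
  ⋃ (j : ℕ) (i : Fin n) (q : ℤ), {x | x i = z i - r + q * (r / 2 ^ j)}

lemma volume_gridLines : volume (gridLines n z r) = 0 :=
  measure_iUnion_null fun _ => measure_iUnion_null fun i => measure_iUnion_null fun _ =>
    Measure.pi_hyperplane (fun _ => volume) i _

def dyadicIndex (n : ℕ) (z : Fin n → ℝ) (r : ℝ) (j : ℕ) (x : Fin n → ℝ) : Fin n → ℕ :=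
  fun i => ⌊(x i - (z i - r)) / (2 * (r / 2 ^ j))⌋₊

lemma dyadicIndex_lt (hr : 0 < r) {x : Fin n → ℝ} (hx : x ∈ cube n z r) (j : ℕ) (i : Fin n) :
    dyadicIndex n z r j x i < 2 ^ j := by
  have hs : 0 < 2 * (r / 2 ^ j) := by positivity
  refine (Nat.floor_lt (div_nonneg ?_ hs.le)).mpr ?_
  · linarith [(abs_sub_lt_iff.mp (hx i)).2]
  · rw [div_lt_iff₀ hs]
    push_cast
    rw [show (2 : ℝ) ^ j * (2 * (r / 2 ^ j)) = 2 * r by field_simp]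
    linarith [(abs_sub_lt_iff.mp (hx i)).1]

lemma mem_dyadicCube_dyadicIndex (hr : 0 < r) {x : Fin n → ℝ} (hx : x ∈ cube n z r)
    (hxg : x ∉ gridLines n z r) (j : ℕ) : x ∈ dyadicCube n z r j (dyadicIndex n z r j x) := by
  rw [mem_dyadicCube_iff]
  intro i
  set u := x i - (z i - r) with hu_def
  set m := dyadicIndex n z r j x i
  have hs : 0 < 2 * (r / 2 ^ j) := by positivity
  have hu : 0 ≤ u := by linarith [(abs_sub_lt_iff.mp (hx i)).2]
  have hm : (m : ℝ) * (2 * (r / 2 ^ j)) ≤ u := (le_div_iff₀ hs).mp (Nat.floor_le (by positivity))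
  have hm' : u < (m + 1) * (2 * (r / 2 ^ j)) := (div_lt_iff₀ hs).mp (Nat.lt_floor_add_one _)
  have hne : (m : ℝ) * (2 * (r / 2 ^ j)) ≠ u := fun h => hxg <| by
    simp only [gridLines, mem_iUnion]
    exact ⟨j, i, 2 * m, by rw [mem_ofPred_eq]; push_cast; linarith⟩
  constructor <;> nlinarith [lt_of_le_of_ne hm hne]

lemma dyadicCube_dyadicIndex_succ_subset (hr : 0 < r) {x : Fin n → ℝ} (hx : x ∈ cube n z r)
    (hxg : x ∉ gridLines n z r) (j : ℕ) :
    dyadicCube n z r (j + 1) (dyadicIndex n z r (j + 1) x) ⊆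
      dyadicCube n z r j (dyadicIndex n z r j x) := by
  have hsub := dyadicCube_succ_subset (z := z) hr j (dyadicIndex n z r (j + 1) x)
  rwa [eq_of_mem_dyadicCube hr (hsub (mem_dyadicCube_dyadicIndex hr hx hxg (j + 1)))
    (mem_dyadicCube_dyadicIndex hr hx hxg j)] at hsub

lemma exists_dyadicCube_dyadicIndex_subset (hr : 0 < r) {x : Fin n → ℝ} (hx : x ∈ cube n z r)
    (hxg : x ∉ gridLines n z r) {U : Set (Fin n → ℝ)} (hU : IsOpen U) (hxU : x ∈ U) :
    ∃ j, dyadicCube n z r j (dyadicIndex n z r j x) ⊆ U := by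
  obtain ⟨ε, hε, hball⟩ := Metric.isOpen_iff.mp hU x hxU
  obtain ⟨j, hj⟩ := pow_unbounded_of_one_lt (2 * r / ε) one_lt_two
  refine ⟨j, fun y hy => hball ?_⟩
  have hxD := mem_dyadicCube_dyadicIndex hr hx hxg j
  rw [dyadicCube, cube_eq_ball (by positivity)] at hxD hy
  rw [Metric.mem_ball] at hxD hy ⊢
  calc dist y x ≤ dist y _ + dist x _ := dist_triangle_right _ _ _
    _ < r / 2 ^ j + r / 2 ^ j := add_lt_add hy hxD
    _ < ε := by
      rw [div_lt_iff₀ hε] at hj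
      rw [← add_div, div_lt_iff₀ (by positivity)]
      linarith

variable {θ : ℝ≥0∞} {A : Set (Fin n → ℝ)}

lemma volume_le_mul_of_subset_isOpen (hr : 0 < r) (hA : A ⊆ cube n z r)
    (hAg : Disjoint A (gridLines n z r))
    (hθ : ∀ j m, (∀ i, m i < 2 ^ j) → (A ∩ dyadicCube n z r j m).Nonempty →
      volume (A ∩ dyadicCube n z r j m) ≤ θ * volume (dyadicCube n z r j m))
    {U : Set (Fin n → ℝ)} (hU : IsOpen U) (hAU : A ⊆ U) : volume A ≤ θ * volume U := by
  set G : ℕ → Set (Fin n → ℝ) := fun j => {x ∈ A | dyadicCube n z r j (dyadicIndex n z r j x) ⊆ U}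
  have hG_mono : Monotone G := monotone_nat_of_le_succ fun j x ⟨hxA, hxU⟩ =>
    ⟨hxA, (dyadicCube_dyadicIndex_succ_subset hr (hA hxA) (hAg.notMem_of_mem_left hxA) j).trans hxU⟩
  have hG_union : ⋃ j, G j = A := by
    refine (iUnion_subset fun j => sep_subset _ _).antisymm fun x hxA => mem_iUnion.mpr ?_
    obtain ⟨j, hj⟩ := exists_dyadicCube_dyadicIndex_subset hr (hA hxA)
      (hAg.notMem_of_mem_left hxA) hU (hAU hxA)
    exact ⟨j, hxA, hj⟩
  suffices ∀ j, volume (G j) ≤ θ * volume U by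
    rw [← hG_union, hG_mono.measure_iUnion]
    exact iSup_le this
  intro j
  set S : Set (Fin n → ℕ) := {m | (∀ i, m i < 2 ^ j) ∧ dyadicCube n z r j m ⊆ U ∧
    (A ∩ dyadicCube n z r j m).Nonempty}
  have hGS : G j ⊆ ⋃ m ∈ S, A ∩ dyadicCube n z r j m := fun x ⟨hxA, hxU⟩ => by
    have hxD := mem_dyadicCube_dyadicIndex hr (hA hxA) (hAg.notMem_of_mem_left hxA) j
    exact mem_biUnion ⟨dyadicIndex_lt hr (hA hxA) j, hxU, x, hxA, hxD⟩ ⟨hxA, hxD⟩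
  have hS_disj : S.PairwiseDisjoint (dyadicCube n z r j) := fun m _ m' _ hne =>
    Set.disjoint_left.mpr fun x hx hx' => hne (eq_of_mem_dyadicCube hr hx hx')
  calc volume (G j) ≤ ∑' m : S, volume (A ∩ dyadicCube n z r j m) :=
        (measure_mono hGS).trans (measure_biUnion_le volume S.to_countable _)
    _ ≤ ∑' m : S, θ * volume (dyadicCube n z r j m) :=
        ENNReal.tsum_le_tsum fun m => hθ j m m.2.1 m.2.2.2
    _ = θ * volume (⋃ m ∈ S, dyadicCube n z r j m) := by
        rw [ENNReal.tsum_mul_left, measure_biUnion S.to_countable hS_disj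
          fun m _ => measurableSet_dyadicCube j m]
    _ ≤ θ * volume U := by gcongr; exact iUnion₂_subset fun m hm => hm.2.1

/-- A dyadic form of the Lebesgue density theorem. -/
lemma volume_eq_zero_of_forall_dyadicCube (hr : 0 < r) (hA : A ⊆ cube n z r)
    (hAg : Disjoint A (gridLines n z r)) (hθ1 : θ < 1)
    (hθ : ∀ j m, (∀ i, m i < 2 ^ j) → (A ∩ dyadicCube n z r j m).Nonempty →
      volume (A ∩ dyadicCube n z r j m) ≤ θ * volume (dyadicCube n z r j m)) :
    volume A = 0 := by
  have hA_fin : volume A ≠ ∞ := ne_top_of_le_ne_top (volume_cube_ne_top z r) (measure_mono hA)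
  have hle : volume A ≤ θ * volume A := by
    refine ENNReal.le_of_forall_pos_le_add fun ε hε _ => ?_
    obtain ⟨U, hAU, hU, hUlt⟩ := A.exists_isOpen_lt_of_lt _
      (ENNReal.lt_add_right hA_fin (ENNReal.coe_ne_zero.mpr hε.ne'))
    calc volume A ≤ θ * volume U := volume_le_mul_of_subset_isOpen hr hA hAg hθ hU hAU
      _ ≤ θ * (volume A + ε) := by gcongr
      _ ≤ θ * volume A + ε := by
        rw [mul_add]
        gcongr
        exact mul_le_of_le_one_left' hθ1.le
  by_contra h0
  have hlt := (ENNReal.mul_lt_mul_iff_left h0 hA_fin).mpr hθ1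
  rw [one_mul] at hlt
  exact hlt.not_ge hle

/-- Here a dyadic cube is encoded by the pair `p` of its generation `p.1` and position `p.2`. -/
def dyadicAncestor (j : ℕ) (p : ℕ × (Fin n → ℕ)) : ℕ × (Fin n → ℕ) :=
  (j, fun i => p.2 i / 2 ^ (p.1 - j))

lemma dyadicAncestor_self (p : ℕ × (Fin n → ℕ)) : dyadicAncestor p.1 p = p := by
  simp [dyadicAncestor]

lemma dyadicAncestor_dyadicAncestor {j j' : ℕ} {p : ℕ × (Fin n → ℕ)} (hj : j ≤ j')
    (hj' : j' ≤ p.1) : dyadicAncestor j (dyadicAncestor j' p) = dyadicAncestor j p := by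
  simp only [dyadicAncestor, Nat.div_div_eq_div_mul, ← pow_add, Prod.mk.injEq, true_and]
  funext i
  congr 2
  omega

lemma dyadicCube_subset_dyadicAncestor (hr : 0 < r) {j : ℕ} {p : ℕ × (Fin n → ℕ)}
    (hj : j ≤ p.1) :
    dyadicCube n z r p.1 p.2 ⊆
      dyadicCube n z r (dyadicAncestor j p).1 (dyadicAncestor j p).2 := by
  have h := dyadicCube_add_subset (z := z) hr j (p.1 - j) p.2
  rwa [Nat.add_sub_cancel' hj] at h

lemma dyadicAncestor_lt {j : ℕ} {p : ℕ × (Fin n → ℕ)} (hp : ∀ i, p.2 i < 2 ^ p.1)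
    (hj : j ≤ p.1) (i : Fin n) : (dyadicAncestor j p).2 i < 2 ^ j := by
  rw [dyadicAncestor, Nat.div_lt_iff_lt_mul (by positivity), ← pow_add, Nat.add_sub_cancel' hj]
  exact hp i

variable (n z r) in
def IsHeavy (E : Set (Fin n → ℝ)) (ρ : ℝ≥0∞) (p : ℕ × (Fin n → ℕ)) : Prop :=
  (∀ i, p.2 i < 2 ^ p.1) ∧
    volume (dyadicCube n z r p.1 p.2) < ρ * volume (E ∩ dyadicCube n z r p.1 p.2)

variable (n z r) in
/-- The Calderón–Zygmund cubes of `E`. -/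
def stoppingCubes (E : Set (Fin n → ℝ)) (ρ : ℝ≥0∞) : Set (ℕ × (Fin n → ℕ)) :=
  {p | IsHeavy n z r E ρ p ∧ ∀ j < p.1, ¬ IsHeavy n z r E ρ (dyadicAncestor j p)}

variable {E : Set (Fin n → ℝ)} {ρ : ℝ≥0∞}

lemma exists_mem_stoppingCubes_superset (hr : 0 < r) {p : ℕ × (Fin n → ℕ)}
    (hp : IsHeavy n z r E ρ p) : ∃ q ∈ stoppingCubes n z r E ρ,
      dyadicCube n z r p.1 p.2 ⊆ dyadicCube n z r q.1 q.2 := by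
  classical
  have hex : ∃ j, j ≤ p.1 ∧ IsHeavy n z r E ρ (dyadicAncestor j p) :=
    ⟨p.1, le_rfl, by rwa [dyadicAncestor_self]⟩
  obtain ⟨hle, hheavy⟩ := Nat.find_spec hex
  refine ⟨dyadicAncestor (Nat.find hex) p, ⟨hheavy, fun j (hj : j < Nat.find hex) h => ?_⟩,
    dyadicCube_subset_dyadicAncestor hr hle⟩
  rw [dyadicAncestor_dyadicAncestor hj.le hle] at h
  exact Nat.find_min hex hj ⟨hj.le.trans hle, h⟩

lemma pairwiseDisjoint_stoppingCubes (hr : 0 < r) :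
    (stoppingCubes n z r E ρ).PairwiseDisjoint fun p => dyadicCube n z r p.1 p.2 := by
  suffices key : ∀ p ∈ stoppingCubes n z r E ρ, ∀ q ∈ stoppingCubes n z r E ρ, p.1 ≤ q.1 →
      ∀ x ∈ dyadicCube n z r p.1 p.2, x ∈ dyadicCube n z r q.1 q.2 → p = q by
    intro p hp q hq hpq
    refine Set.disjoint_left.mpr fun x hxp hxq => hpq ?_
    rcases le_total p.1 q.1 with h | h
    exacts [key p hp q hq h x hxp hxq, (key q hq p hp h x hxq hxp).symm]
  intro p hp q hq hle x hxp hxq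
  have hanc : dyadicAncestor p.1 q = p := Prod.ext rfl
    (eq_of_mem_dyadicCube hr (dyadicCube_subset_dyadicAncestor hr hle hxq) hxp)
  rcases hle.lt_or_eq with hlt | heq
  · exact absurd (hanc ▸ hp.1) (hq.2 p.1 hlt)
  · rw [heq, dyadicAncestor_self] at hanc
    exact hanc.symm

lemma volume_biUnion_stoppingCubes_le (hr : 0 < r) (hE : MeasurableSet E) :
    volume (⋃ p ∈ stoppingCubes n z r E ρ, dyadicCube n z r p.1 p.2) ≤ ρ * volume E := by
  set T := stoppingCubes n z r E ρ
  set D := fun p : ℕ × (Fin n → ℕ) => dyadicCube n z r p.1 p.2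
  have hdisj : T.PairwiseDisjoint D := pairwiseDisjoint_stoppingCubes hr
  calc volume (⋃ p ∈ T, D p)
      = ∑' p : T, volume (D p) :=
        measure_biUnion T.to_countable hdisj fun p _ => measurableSet_dyadicCube _ _
    _ ≤ ∑' p : T, ρ * volume (E ∩ D p) :=
        ENNReal.tsum_le_tsum fun p => p.2.1.2.le
    _ = ρ * volume (⋃ p ∈ T, E ∩ D p) := by
        rw [ENNReal.tsum_mul_left, measure_biUnion T.to_countable
          (hdisj.mono_on fun _ _ => inter_subset_right)
          fun p _ => hE.inter (measurableSet_dyadicCube _ _)]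
    _ ≤ ρ * volume E := by gcongr; exact iUnion₂_subset fun _ _ => inter_subset_left

lemma volume_diff_biUnion_stoppingCubes (hr : 0 < r) (hEQ : E ⊆ cube n z r) (hρ : 1 < ρ)
    (hρ_top : ρ ≠ ∞) :
    volume (E \ ⋃ p ∈ stoppingCubes n z r E ρ, dyadicCube n z r p.1 p.2) = 0 := by
  set A := (E \ ⋃ p ∈ stoppingCubes n z r E ρ, dyadicCube n z r p.1 p.2) \ gridLines n z r
  have hρ0 : ρ ≠ 0 := (zero_lt_one.trans hρ).ne'
  have hA : volume A = 0 := by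
    refine volume_eq_zero_of_forall_dyadicCube hr (fun x hx => hEQ hx.1.1) disjoint_sdiff_left
      (ENNReal.inv_lt_one.mpr hρ) fun j m hm ⟨x, hxA, hxD⟩ => ?_
    have hlight : ¬ IsHeavy n z r E ρ (j, m) := fun hheavy => by
      obtain ⟨q, hq, hsub⟩ := exists_mem_stoppingCubes_superset hr hheavy
      exact hxA.1.2 (mem_biUnion hq (hsub hxD))
    have hle : ρ * volume (E ∩ dyadicCube n z r j m) ≤ volume (dyadicCube n z r j m) :=
      not_lt.mp fun h => hlight ⟨hm, h⟩
    calc volume (A ∩ dyadicCube n z r j m) ≤ volume (E ∩ dyadicCube n z r j m) :=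
          measure_mono (inter_subset_inter_left _ fun x hx => hx.1.1)
      _ = ρ⁻¹ * (ρ * volume (E ∩ dyadicCube n z r j m)) := by
          rw [← mul_assoc, ENNReal.inv_mul_cancel hρ0 hρ_top, one_mul]
      _ ≤ ρ⁻¹ * volume (dyadicCube n z r j m) := by gcongr
  exact measure_mono_null (fun x hx => by_cases (fun hg : x ∈ gridLines n z r => Or.inr hg)
    fun hg => Or.inl ⟨hx, hg⟩) (measure_union_null hA volume_gridLines)

lemma not_isHeavy_zero (hEQ : E ⊆ cube n z r) (hE : ρ * volume E ≤ volume (cube n z r)) :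
    ¬ IsHeavy n z r E ρ (0, 0) := fun ⟨_, h⟩ => by
  rw [dyadicCube_zero, inter_eq_left.mpr hEQ] at h
  exact h.not_ge hE

lemma measure_eq_tsum_stoppingCubes {μ : Measure (Fin n → ℝ)} (hμ : μ ≪ volume) (hr : 0 < r)
    (hEQ : E ⊆ cube n z r) (hE : MeasurableSet E) (hρ : 1 < ρ) (hρ_top : ρ ≠ ∞) :
    μ E = ∑' p : stoppingCubes n z r E ρ, μ (E ∩ dyadicCube n z r p.1.1 p.1.2) := by
  set F := ⋃ p ∈ stoppingCubes n z r E ρ, dyadicCube n z r p.1 p.2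
  have hF : MeasurableSet F :=
    MeasurableSet.biUnion (to_countable _) fun p _ => measurableSet_dyadicCube _ _
  rw [← measure_inter_add_sdiff E hF, hμ (volume_diff_biUnion_stoppingCubes hr hEQ hρ hρ_top),
    add_zero, inter_iUnion₂, measure_biUnion (to_countable _)
      ((pairwiseDisjoint_stoppingCubes hr).mono_on fun _ _ => inter_subset_right)
      fun p _ => hE.inter (measurableSet_dyadicCube _ _)]

/-- The parent of a stopping cube is not heavy, and it is `2ⁿ` times larger. -/
lemma mul_volume_inter_le_of_mem_stoppingCubes (hr : 0 < r)
    (hroot : ¬ IsHeavy n z r E ρ (0, 0)) {p : ℕ × (Fin n → ℕ)}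
    (hp : p ∈ stoppingCubes n z r E ρ) :
    ρ * volume (E ∩ dyadicCube n z r p.1 p.2) ≤ 2 ^ n * volume (dyadicCube n z r p.1 p.2) := by
  obtain ⟨j, m⟩ := p
  obtain ⟨hheavy, hmin⟩ := hp
  have hm := hheavy.1
  rcases j with _ | j
  · refine absurd ?_ hroot
    convert hheavy using 2
    funext i
    have := hm i
    simp only [pow_zero, Nat.lt_one_iff] at this
    exact this.symm
  · set q := dyadicAncestor j (j + 1, m)
    have hsub : dyadicCube n z r (j + 1) m ⊆ dyadicCube n z r q.1 q.2 :=
      dyadicCube_subset_dyadicAncestor hr (p := (j + 1, m)) j.le_succ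
    have hq : ρ * volume (E ∩ dyadicCube n z r q.1 q.2) ≤ volume (dyadicCube n z r q.1 q.2) :=
      not_lt.mp fun h => hmin j j.lt_succ_self ⟨dyadicAncestor_lt hm j.le_succ, h⟩
    calc ρ * volume (E ∩ dyadicCube n z r (j + 1) m)
        ≤ ρ * volume (E ∩ dyadicCube n z r q.1 q.2) := by gcongr
      _ ≤ volume (dyadicCube n z r q.1 q.2) := hq
      _ = 2 ^ n * volume (dyadicCube n z r (j + 1) m) := volume_dyadicCube_eq_two_pow_mul hr _ _ _

end DyadicGrid

theorem measure_le_pow_mul_of_weak_decay {μ : Measure (Fin n → ℝ)} (hμ : μ ≪ volume)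
    {K : ℝ≥0∞} (hK : ∀ z r, 0 < r → ∀ F ⊆ cube n z r, MeasurableSet F →
      2 * volume F ≤ volume (cube n z r) → μ F ≤ K * μ (cube n z r)) (k : ℕ) :
    ∀ z r, 0 < r → ∀ E ⊆ cube n z r, MeasurableSet E →
      2 ^ ((n + 2) * k) * volume E ≤ volume (cube n z r) → μ E ≤ K ^ k * μ (cube n z r) := by
  induction k with
  | zero => exact fun z r _ E hEQ _ _ => by simpa using measure_mono hEQ
  | succ k ih =>
    intro z r hr E hEQ hE hvol
    -- `n + 2` rather than `n + 1` keeps `ρ > 1`, which the density argument needs, for `n = k = 0`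
    set ρ : ℝ≥0∞ := 2 ^ ((n + 2) * k + n + 1)
    set T := stoppingCubes n z r E ρ
    set D := fun p : ℕ × (Fin n → ℕ) => dyadicCube n z r p.1 p.2
    set F := ⋃ p ∈ T, D p
    have hρ : 2 ^ ((n + 2) * (k + 1)) = 2 * ρ := by
      rw [show (n + 2) * (k + 1) = (n + 2) * k + n + 1 + 1 by ring, pow_succ, mul_comm]
    have hroot : ¬ IsHeavy n z r E ρ (0, 0) := not_isHeavy_zero hEQ <| le_trans
      (by rw [hρ, mul_assoc]; exact le_mul_of_one_le_left' (by norm_num)) hvol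
    have hF : MeasurableSet F :=
      MeasurableSet.biUnion T.to_countable fun p _ => measurableSet_dyadicCube _ _
    have hFQ : F ⊆ cube n z r := iUnion₂_subset fun p hp => dyadicCube_subset_cube hr hp.1.1
    have hF_half : 2 * volume F ≤ volume (cube n z r) :=
      calc 2 * volume F ≤ 2 * (ρ * volume E) :=
            mul_le_mul_right (volume_biUnion_stoppingCubes_le hr hE) _
        _ = 2 ^ ((n + 2) * (k + 1)) * volume E := by rw [hρ, mul_assoc]
        _ ≤ volume (cube n z r) := hvol
    have hpieces : ∀ p ∈ T, μ (E ∩ D p) ≤ K ^ k * μ (D p) := fun p hp => by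
      refine ih _ _ (by positivity) _ inter_subset_right
        (hE.inter (measurableSet_dyadicCube _ _)) ?_
      have h := mul_volume_inter_le_of_mem_stoppingCubes hr hroot hp
      rw [show ρ = 2 ^ n * (2 * 2 ^ ((n + 2) * k)) by ring, mul_assoc] at h
      refine le_trans ?_ ((ENNReal.mul_le_mul_iff_right (by positivity) (by simp)).mp h)
      rw [mul_assoc]
      exact le_mul_of_one_le_left' (by norm_num)
    calc μ E = ∑' p : T, μ (E ∩ D p) := measure_eq_tsum_stoppingCubes hμ hr hEQ hE
          (one_lt_pow₀ ENNReal.one_lt_two (by omega)) (ENNReal.pow_ne_top ENNReal.ofNat_ne_top)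
      _ ≤ ∑' p : T, K ^ k * μ (D p) := ENNReal.tsum_le_tsum fun p => hpieces p p.2
      _ = K ^ k * μ F := by
          rw [ENNReal.tsum_mul_left, measure_biUnion T.to_countable
            (pairwiseDisjoint_stoppingCubes hr) fun p _ => measurableSet_dyadicCube _ _]
      _ ≤ K ^ k * (K * μ (cube n z r)) := by gcongr; exact hK z r hr F hFQ hF hF_half
      _ = K ^ (k + 1) * μ (cube n z r) := by rw [← mul_assoc, ← pow_succ]

section Weights

variable {X : Type*} [MeasureSpace X]

/-- `weightMeasure w E` is the `w(E) = ∫_E w` of the paper. -/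
def weightMeasure (w : X → ℝ) : Measure X :=
  volume.withDensity fun x => ENNReal.ofReal (w x)

variable {w : X → ℝ} {s : Set X}

lemma weightMeasure_eq_ofReal_integral (hw : ∀ x, 0 ≤ w x) (hs : MeasurableSet s)
    (hi : IntegrableOn w s) : weightMeasure w s = ENNReal.ofReal (∫ x in s, w x) := by
  rw [weightMeasure, withDensity_apply _ hs, ofReal_integral_eq_lintegral_ofReal hi
    (ae_of_all _ fun x => hw x)]

lemma integral_eq_weightMeasure_toReal (hw : ∀ x, 0 ≤ w x) (hs : MeasurableSet s)
    (hi : IntegrableOn w s) : ∫ x in s, w x = (weightMeasure w s).toReal := by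
  rw [weightMeasure_eq_ofReal_integral hw hs hi,
    ENNReal.toReal_ofReal (setIntegral_nonneg hs fun x _ => hw x)]

lemma measure_univ_sq_le_lintegral_mul_lintegral_inv {α : Type*} [MeasurableSpace α]
    (μ : Measure α) {f : α → ℝ≥0∞} (hf : AEMeasurable f μ) (h0 : ∀ x, f x ≠ 0)
    (htop : ∀ x, f x ≠ ∞) : μ univ ^ 2 ≤ (∫⁻ x, f x ∂μ) * ∫⁻ x, (f x)⁻¹ ∂μ := by
  have hsqrt : ∀ g : α → ℝ≥0∞, ∀ x, (g x ^ (1 / 2 : ℝ)) ^ (2 : ℝ) = g x := fun g x => by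
    rw [← ENNReal.rpow_mul]; norm_num
  have hone : ∀ x, f x ^ (1 / 2 : ℝ) * (f x)⁻¹ ^ (1 / 2 : ℝ) = 1 := fun x => by
    rw [← ENNReal.mul_rpow_of_nonneg _ _ (by norm_num), ENNReal.mul_inv_cancel (h0 x) (htop x),
      ENNReal.one_rpow]
  have holder := ENNReal.lintegral_mul_le_Lp_mul_Lq μ Real.HolderConjugate.two_two
    (hf.pow_const (1 / 2 : ℝ)) (hf.inv.pow_const (1 / 2 : ℝ))
  simp only [Pi.mul_apply, Pi.inv_apply, hone, lintegral_one, hsqrt fun x => f x,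
    hsqrt fun x => (f x)⁻¹] at holder
  calc μ univ ^ 2 ≤ ((∫⁻ x, f x ∂μ) ^ (1 / 2 : ℝ) * (∫⁻ x, (f x)⁻¹ ∂μ) ^ (1 / 2 : ℝ)) ^ 2 := by
        gcongr
    _ = (∫⁻ x, f x ∂μ) * ∫⁻ x, (f x)⁻¹ ∂μ := by
        rw [mul_pow, ← ENNReal.rpow_natCast, ← ENNReal.rpow_natCast, ← ENNReal.rpow_mul,
          ← ENNReal.rpow_mul]
        norm_num

end Weights

lemma one_sub_inv_four_mul_mem_Ioo {C : ℝ} (hC : 1 ≤ C) : 1 - (4 * C)⁻¹ ∈ Ioo 0 1 := by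
  have h₀ : 0 < (4 * C)⁻¹ := by positivity
  have h₁ : (4 * C)⁻¹ < 1 := inv_lt_one_of_one_lt₀ (by linarith)
  constructor <;> linarith

lemma exists_pow_le_and_pow_le_rpow {t α K : ℝ} (ht0 : 0 < t) (ht1 : t ≤ 1) (hα0 : 0 < α)
    (hα1 : α < 1) (hK0 : 0 < K) (hK1 : K < 1) :
    ∃ k : ℕ, t ≤ α ^ k ∧ K ^ k ≤ K⁻¹ * t ^ (Real.log K / Real.log α) := by
  have hlogα : Real.log α < 0 := Real.log_neg hα0 hα1
  set s := Real.log t / Real.log α with hs_def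
  have hs : 0 ≤ s := div_nonneg_of_nonpos (Real.log_nonpos ht0.le ht1) hlogα.le
  have hαs : α ^ s = t := by
    rw [Real.rpow_def_of_pos hα0, mul_div_cancel₀ _ hlogα.ne, Real.exp_log ht0]
  have htK : t ^ (Real.log K / Real.log α) = K ^ s := by
    rw [Real.rpow_def_of_pos ht0, Real.rpow_def_of_pos hK0, hs_def]
    ring_nf
  refine ⟨⌊s⌋₊, ?_, ?_⟩
  · rw [← hαs, ← Real.rpow_natCast]
    exact Real.rpow_le_rpow_of_exponent_ge hα0 hα1.le (Nat.floor_le hs)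
  · rw [htK, inv_mul_eq_div, ← Real.rpow_sub_one hK0.ne', ← Real.rpow_natCast]
    exact Real.rpow_le_rpow_of_exponent_ge hK0 hK1.le (by linarith [Nat.lt_floor_add_one s])

end Muckenhoupt

namespace IsA2

open Muckenhoupt

variable {n : ℕ} {w : (Fin n → ℝ) → ℝ} {C : ℝ} {z : Fin n → ℝ} {r : ℝ}

lemma mono {C' : ℝ} (hw : IsA2 n w C) (hC : C ≤ C') : IsA2 n w C' :=
  ⟨hw.1, hw.2.1, hw.2.2.1, fun z r hr => (hw.2.2.2 z r hr).trans (by gcongr)⟩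

lemma integral_eq_weightMeasure_toReal (hw : IsA2 n w C) {s : Set (Fin n → ℝ)}
    (hs : MeasurableSet s) (hsQ : s ⊆ cube n z r) :
    ∫ x in s, w x = (weightMeasure w s).toReal :=
  Muckenhoupt.integral_eq_weightMeasure_toReal (fun x => (hw.1 x).le) hs
    ((integrableOn_cube hw.2.1 z r).mono_set hsQ)

lemma weightMeasure_cube_ne_top (hw : IsA2 n w C) (z : Fin n → ℝ) (r : ℝ) :
    weightMeasure w (cube n z r) ≠ ∞ := by
  rw [weightMeasure_eq_ofReal_integral (fun x => (hw.1 x).le) (measurableSet_cube z r)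
    (integrableOn_cube hw.2.1 z r)]
  exact ENNReal.ofReal_ne_top

lemma weightMeasure_mul_weightMeasure_inv_le (hw : IsA2 n w C) (z : Fin n → ℝ)
    (hr : 0 < r) :
    weightMeasure w (cube n z r) * weightMeasure (fun x => (w x)⁻¹) (cube n z r) ≤
      ENNReal.ofReal C * volume (cube n z r) ^ 2 := by
  rw [weightMeasure_eq_ofReal_integral (fun x => (hw.1 x).le) (measurableSet_cube z r)
      (integrableOn_cube hw.2.1 z r),
    weightMeasure_eq_ofReal_integral (fun x => (inv_pos.mpr (hw.1 x)).le) (measurableSet_cube z r)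
      (integrableOn_cube hw.2.2.1 z r),
    ← ENNReal.ofReal_mul (setIntegral_nonneg (measurableSet_cube z r) fun x _ => (hw.1 x).le),
    ← ENNReal.ofReal_toReal (volume_cube_ne_top z r), ← ENNReal.ofReal_pow ENNReal.toReal_nonneg,
    ← ENNReal.ofReal_mul' (by positivity)]
  exact ENNReal.ofReal_le_ofReal (hw.2.2.2 z r hr)

/-- By Cauchy–Schwarz, `|A|² ≤ w(A) w⁻¹(A)`. -/
lemma sq_volume_mul_le (hw : IsA2 n w C) (hr : 0 < r) {A : Set (Fin n → ℝ)}
    (hAQ : A ⊆ cube n z r) (hA : MeasurableSet A) :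
    volume A ^ 2 * weightMeasure w (cube n z r) ≤
      ENNReal.ofReal C * volume (cube n z r) ^ 2 * weightMeasure w A := by
  have hCS : volume A ^ 2 ≤ weightMeasure w A * weightMeasure (fun x => (w x)⁻¹) A := by
    have hinv : ∀ x, (ENNReal.ofReal (w x))⁻¹ = ENNReal.ofReal (w x)⁻¹ := fun x =>
      (ENNReal.ofReal_inv_of_pos (hw.1 x)).symm
    have h := measure_univ_sq_le_lintegral_mul_lintegral_inv (volume.restrict A)
      (ENNReal.measurable_ofReal.comp_aemeasurable
        hw.2.1.aestronglyMeasurable.aemeasurable.restrict)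
      (fun x => (ENNReal.ofReal_pos.mpr (hw.1 x)).ne') fun _ => ENNReal.ofReal_ne_top
    simpa only [Measure.restrict_apply_univ, Function.comp_apply, hinv, weightMeasure,
      withDensity_apply _ hA] using h
  calc volume A ^ 2 * weightMeasure w (cube n z r)
      ≤ weightMeasure w A * weightMeasure (fun x => (w x)⁻¹) A * weightMeasure w (cube n z r) :=
        mul_le_mul_left hCS _
    _ ≤ weightMeasure w A * weightMeasure (fun x => (w x)⁻¹) (cube n z r) *
          weightMeasure w (cube n z r) := by gcongr
    _ = weightMeasure w A * (weightMeasure w (cube n z r) *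
          weightMeasure (fun x => (w x)⁻¹) (cube n z r)) := by ring
    _ ≤ weightMeasure w A * (ENNReal.ofReal C * volume (cube n z r) ^ 2) :=
        mul_le_mul_right (hw.weightMeasure_mul_weightMeasure_inv_le z hr) _
    _ = _ := by ring

lemma weightMeasure_le_of_two_mul_volume_le (hw : IsA2 n w C) (hC : 0 < C) (hr : 0 < r)
    {F : Set (Fin n → ℝ)} (hFQ : F ⊆ cube n z r) (hF : MeasurableSet F)
    (hhalf : 2 * volume F ≤ volume (cube n z r)) :
    weightMeasure w F ≤ ENNReal.ofReal (1 - (4 * C)⁻¹) * weightMeasure w (cube n z r) := by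
  set Q := cube n z r
  set A := Q \ F
  have hA : MeasurableSet A := (measurableSet_cube z r).diff hF
  have hQ_top : volume Q ≠ ∞ := volume_cube_ne_top z r
  have hsplit : ∀ μ : Measure (Fin n → ℝ), μ F + μ A = μ Q := fun μ => by
    rw [← measure_union disjoint_sdiff_right hA, union_sdiff_cancel hFQ]
  have hQA : volume Q ≤ 2 * volume A := by
    refine (ENNReal.add_le_add_iff_left hQ_top).mp ?_
    calc volume Q + volume Q = 2 * volume F + 2 * volume A := by rw [← mul_add, hsplit]; ring
      _ ≤ volume Q + 2 * volume A := by gcongr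
  have hwQA : weightMeasure w Q ≤ 4 * ENNReal.ofReal C * weightMeasure w A := by
    refine (ENNReal.mul_le_mul_iff_right (pow_ne_zero 2 (volume_cube_pos z hr).ne')
      (ENNReal.pow_ne_top hQ_top)).mp ?_
    calc volume Q ^ 2 * weightMeasure w Q ≤ (2 * volume A) ^ 2 * weightMeasure w Q := by gcongr
      _ = 4 * (volume A ^ 2 * weightMeasure w Q) := by ring
      _ ≤ 4 * (ENNReal.ofReal C * volume Q ^ 2 * weightMeasure w A) :=
          mul_le_mul_right (hw.sq_volume_mul_le hr sdiff_subset hA) _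
      _ = _ := by ring
  have hAQ : ENNReal.ofReal (4 * C)⁻¹ * weightMeasure w Q ≤ weightMeasure w A := by
    rw [ENNReal.ofReal_inv_of_pos (by positivity), ENNReal.ofReal_mul (by norm_num),
      ENNReal.ofReal_ofNat, ← ENNReal.div_eq_inv_mul]
    exact ENNReal.div_le_of_le_mul' hwQA
  have hwQ_top := hw.weightMeasure_cube_ne_top z r
  calc weightMeasure w F = weightMeasure w Q - weightMeasure w A :=
        ENNReal.eq_sub_of_add_eq (ne_top_of_le_ne_top hwQ_top (measure_mono sdiff_subset))
          (hsplit _)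
    _ ≤ weightMeasure w Q - ENNReal.ofReal (4 * C)⁻¹ * weightMeasure w Q :=
        tsub_le_tsub_left hAQ _
    _ = ENNReal.ofReal (1 - (4 * C)⁻¹) * weightMeasure w Q := by
        rw [ENNReal.ofReal_sub _ (by positivity), ENNReal.ofReal_one,
          ENNReal.sub_mul fun _ _ => hwQ_top, one_mul]

variable {E : Set (Fin n → ℝ)}

lemma integral_cube_pos (hw : IsA2 n w C) (z : Fin n → ℝ) (hr : 0 < r) :
    0 < ∫ x in cube n z r, w x := by
  rw [setIntegral_pos_iff_support_of_nonneg_ae (ae_of_all _ fun x => (hw.1 x).le)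
    (integrableOn_cube hw.2.1 z r), Function.support_eq_univ fun x => (hw.1 x).ne', univ_inter]
  exact volume_cube_pos z hr

lemma inv_mul_rpow_le_div (hw : IsA2 n w C) (hC : 0 < C) {β p : ℝ} (hβ : C ≤ β) (hp : 2 ≤ p)
    (hr : 0 < r) (hEQ : E ⊆ cube n z r) (hE : MeasurableSet E) :
    β⁻¹ * ((volume E).toReal / (volume (cube n z r)).toReal) ^ p ≤
      (∫ x in E, w x) / ∫ x in cube n z r, w x := by
  set t := (volume E).toReal / (volume (cube n z r)).toReal
  have hsq : t ^ 2 ≤ C * ((∫ x in E, w x) / ∫ x in cube n z r, w x) := by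
    have h := ENNReal.toReal_mono (ENNReal.mul_ne_top (ENNReal.mul_ne_top ENNReal.ofReal_ne_top
      (ENNReal.pow_ne_top (volume_cube_ne_top z r))) (ne_top_of_le_ne_top
      (hw.weightMeasure_cube_ne_top z r) (measure_mono hEQ))) (hw.sq_volume_mul_le hr hEQ hE)
    rw [ENNReal.toReal_mul, ENNReal.toReal_mul, ENNReal.toReal_mul, ENNReal.toReal_pow,
      ENNReal.toReal_pow, ENNReal.toReal_ofReal hC.le, ← hw.integral_eq_weightMeasure_toReal hE hEQ,
      ← hw.integral_eq_weightMeasure_toReal (measurableSet_cube z r) subset_rfl] at h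
    have hQ : 0 < (volume (cube n z r)).toReal :=
      ENNReal.toReal_pos (volume_cube_pos z hr).ne' (volume_cube_ne_top z r)
    rw [div_pow, ← mul_div_assoc, div_le_div_iff₀ (by positivity) (hw.integral_cube_pos z hr)]
    linarith
  calc β⁻¹ * t ^ p ≤ C⁻¹ * t ^ (2 : ℝ) :=
        mul_le_mul (inv_anti₀ hC hβ) (Real.rpow_le_rpow_of_exponent_ge' (by positivity)
          (toReal_volume_div_le_one hEQ) zero_le_two hp) (by positivity) (by positivity)
    _ ≤ _ := by rwa [inv_mul_le_iff₀ hC, Real.rpow_two]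

lemma integral_le_pow_mul (hw : IsA2 n w C) (hC : 1 ≤ C) (hr : 0 < r) (hEQ : E ⊆ cube n z r)
    (hE : MeasurableSet E) {k : ℕ} (hvol : 2 ^ ((n + 2) * k) * volume E ≤ volume (cube n z r)) :
    ∫ x in E, w x ≤ (1 - (4 * C)⁻¹) ^ k * ∫ x in cube n z r, w x := by
  have h := measure_le_pow_mul_of_weak_decay (withDensity_absolutelyContinuous _ _)
    (fun _ _ hr _ hFQ hF hhalf =>
      hw.weightMeasure_le_of_two_mul_volume_le (by positivity) hr hFQ hF hhalf) k z r hr E hEQ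
    hE hvol
  have hK : 0 ≤ 1 - (4 * C)⁻¹ := (one_sub_inv_four_mul_mem_Ioo hC).1.le
  rw [hw.integral_eq_weightMeasure_toReal hE hEQ,
    hw.integral_eq_weightMeasure_toReal (measurableSet_cube z r) subset_rfl,
    ← ENNReal.toReal_ofReal hK, ← ENNReal.toReal_pow, ← ENNReal.toReal_mul]
  exact ENNReal.toReal_mono
    (ENNReal.mul_ne_top (by finiteness) (hw.weightMeasure_cube_ne_top z r)) h

lemma div_le_mul_rpow (hw : IsA2 n w C) (hC : 1 ≤ C) {β q : ℝ} (hβ : (1 - (4 * C)⁻¹)⁻¹ ≤ β)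
    (hq : q ≤ Real.log (1 - (4 * C)⁻¹) / Real.log (2 ^ (n + 2))⁻¹) (hr : 0 < r)
    (hEQ : E ⊆ cube n z r) (hE : MeasurableSet E) :
    (∫ x in E, w x) / (∫ x in cube n z r, w x) ≤
      β * ((volume E).toReal / (volume (cube n z r)).toReal) ^ q := by
  set K := 1 - (4 * C)⁻¹
  set t := (volume E).toReal / (volume (cube n z r)).toReal
  obtain ⟨hK0, hK1⟩ : K ∈ Ioo 0 1 := one_sub_inv_four_mul_mem_Ioo hC
  have hβ0 : 0 ≤ β := (inv_pos.mpr hK0).le.trans hβ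
  have hQ : 0 < (volume (cube n z r)).toReal :=
    ENNReal.toReal_pos (volume_cube_pos z hr).ne' (volume_cube_ne_top z r)
  have hE_top : volume E ≠ ∞ := ne_top_of_le_ne_top (volume_cube_ne_top z r) (measure_mono hEQ)
  rcases eq_or_ne (volume E) 0 with hE0 | hE0
  · rw [setIntegral_measure_zero _ hE0, zero_div]
    positivity
  have ht0 : 0 < t := div_pos (ENNReal.toReal_pos hE0 hE_top) hQ
  obtain ⟨k, htk, hKk⟩ := exists_pow_le_and_pow_le_rpow (α := ((2 : ℝ) ^ (n + 2))⁻¹) ht0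
    (toReal_volume_div_le_one hEQ) (by positivity)
    (inv_lt_one_of_one_lt₀ (one_lt_pow₀ one_lt_two (by omega))) hK0 hK1
  have hvol : 2 ^ ((n + 2) * k) * volume E ≤ volume (cube n z r) := by
    rw [← ENNReal.toReal_le_toReal (ENNReal.mul_ne_top (by simp) hE_top) (volume_cube_ne_top z r),
      ENNReal.toReal_mul, ENNReal.toReal_pow, ENNReal.toReal_ofNat, pow_mul]
    rw [div_le_iff₀ hQ, inv_pow, inv_mul_eq_div, le_div_iff₀ (by positivity)] at htk
    linarith
  calc (∫ x in E, w x) / ∫ x in cube n z r, w x ≤ K ^ k :=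
        (div_le_iff₀ (hw.integral_cube_pos z hr)).mpr (hw.integral_le_pow_mul hC hr hEQ hE hvol)
    _ ≤ K⁻¹ * t ^ (Real.log K / Real.log (2 ^ (n + 2))⁻¹) := hKk
    _ ≤ β * t ^ q := mul_le_mul hβ (Real.rpow_le_rpow_of_exponent_ge ht0
          (toReal_volume_div_le_one hEQ) hq) (by positivity) hβ0

end IsA2

open Muckenhoupt in
theorem stmt2_general (n : ℕ) (C : ℝ) :
    ∃ η ∈ Set.Ioo (0 : ℝ) 1, ∃ β > (0 : ℝ),
      ∀ w : (Fin n → ℝ) → ℝ, IsA2 n w C →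
        ∀ z r, 0 < r → ∀ E ⊆ cube n z r, MeasurableSet E →
          β⁻¹ * ((volume E).toReal / (volume (cube n z r)).toReal) ^ (1 / (2 * η)) ≤
              (∫ x in E, w x) / (∫ x in cube n z r, w x) ∧
            (∫ x in E, w x) / (∫ x in cube n z r, w x) ≤
              β * ((volume E).toReal / (volume (cube n z r)).toReal) ^ (2 * η) := by
  set C' := max C 1
  set K := 1 - (4 * C')⁻¹
  set ε := Real.log K / Real.log (2 ^ (n + 2))⁻¹
  obtain ⟨hK0, hK1⟩ : K ∈ Ioo 0 1 := one_sub_inv_four_mul_mem_Ioo (le_max_right C 1)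
  have hε : 0 < ε := div_pos_of_neg_of_neg (Real.log_neg hK0 hK1)
    (Real.log_neg (by positivity) (inv_lt_one_of_one_lt₀ (one_lt_pow₀ one_lt_two (by omega))))
  -- shrinking the exponent only weakens the upper bound, and makes `1 / (2η) ≥ 2` in the lower one
  set η := min (ε / 2) (1 / 4)
  have hη : η ≤ 1 / 4 := min_le_right _ _
  refine ⟨η, ⟨by positivity, by linarith⟩, max C' K⁻¹, by positivity,
    fun w hw z r hr E hEQ hE => ?_⟩
  replace hw := hw.mono (le_max_left C 1)
  exact ⟨hw.inv_mul_rpow_le_div (by positivity) (le_max_left _ _)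
      (by rw [le_div_iff₀ (by positivity)]; linarith) hr hEQ hE,
    hw.div_le_mul_rpow (le_max_right C 1) (le_max_right _ _)
      (by linarith [min_le_left (ε / 2) (1 / 4)]) hr hEQ hE⟩

/-- If `w ∈ A₂(ℝⁿ)`, there exist `η ∈ (0,1)` and `β > 0`, depending only on `n`
and `[w]_{A₂}`, such that `β⁻¹ (|E|/|Q|)^{1/(2η)} ≤ w(E)/w(Q) ≤ β (|E|/|Q|)^{2η}`
for every cube `Q` and every measurable `E ⊆ Q`. Here `|⬝|` is Lebesgue measure
and `w(E) = ∫_E w dx`. -/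
theorem stmt2 (n : ℕ) (C : ℝ) (hC : 0 < C) :
    ∃ η ∈ Set.Ioo (0 : ℝ) 1, ∃ β > (0 : ℝ),
      ∀ w : (Fin n → ℝ) → ℝ, IsA2 n w C →
        ∀ z r, 0 < r → ∀ E ⊆ cube n z r, MeasurableSet E →
          β⁻¹ * ((volume E).toReal / (volume (cube n z r)).toReal) ^ (1 / (2 * η)) ≤
              (∫ x in E, w x) / (∫ x in cube n z r, w x) ∧
            (∫ x in E, w x) / (∫ x in cube n z r, w x) ≤
              β * ((volume E).toReal / (volume (cube n z r)).toReal) ^ (2 * η) :=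
  stmt2_general n C
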